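/- Quarter-power limit from truncated square-root factorizations (Appendix F). For each integer m ≥ 1 let s_m(z) = Σ_{l=0}^{m} (−1)^l · binom(1/2, l) · z^l, where binom(1/2, l) is the generalized binomial coefficient; s_m is a polynomial of degree m with s_m(0) = 1, so it factors as s_m(z) = ∏_{a=1}^{m} (1 − z/w_a^{(m)}), where w_1^{(m)},…,w_m^{(m)} are its complex roots listed with multiplicity. Then for every z ∈ ℂ with |z| < 1, lim_{m→∞} ∏_{a=1}^{m} ∏_{b=1}^{m} ( 1 − z/(w_a^{(m)} · w_b^{(m)}) ) = exp( (1/4)·Log(1 − z) ), where Log is the principal branch of the logarithm. -/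

import Mathlib

/-!
The coefficients `cₗ = (-1)ˡ binom(1/2, l)` of `s_m` satisfy `c₀ = 1`, `cₗ < 0` for `l ≥ 1` and
`∑_{l ≤ m} cₗ = (1 - 2m) cₘ > 0`, so `∑_{1 ≤ l ≤ m} |cₗ| < 1` and every root of `s_m` lies outside
the closed unit disc. As a truncation of `√(1 - z)`, `s_m` satisfies
`(1 - z) s_m' + s_m / 2 = O(zᵐ)`; through the logarithmic derivative
`s_m'/s_m = -∑ₖ pₖ₊₁ zᵏ` this forces the power sums `pₖ = ∑ₐ (w_a)⁻ᵏ` to equal `1/2` for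
`1 ≤ k ≤ m`. Hence `log ∏_{a,b} (1 - z/(w_a w_b)) = -∑ₙ pₙ² zⁿ/n` agrees with `¼ log (1 - z)`
up to order `m`, and `|pₙ| = O(n)` lets dominated convergence pass to the limit.
-/

open scoped BigOperators
open Filter

noncomputable def halfBinom (l : ℕ) : ℂ :=
  (∏ i ∈ Finset.range l, ((1 : ℂ) / 2 - (i : ℂ))) / (Nat.factorial l : ℂ)

noncomputable def sFun (m : ℕ) (z : ℂ) : ℂ :=
  ∑ l ∈ Finset.range (m + 1), (-1 : ℂ) ^ l * halfBinom l * z ^ l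

open Finset Polynomial Complex Topology

noncomputable def sqrtOneSubCoeff (l : ℕ) : ℝ :=
  (-1) ^ l * (∏ i ∈ range l, ((1 : ℝ) / 2 - i)) / l.factorial

lemma ofReal_sqrtOneSubCoeff (l : ℕ) : (sqrtOneSubCoeff l : ℂ) = (-1) ^ l * halfBinom l := by
  simp only [sqrtOneSubCoeff, halfBinom]
  push_cast
  ring

@[simp]
lemma sqrtOneSubCoeff_zero : sqrtOneSubCoeff 0 = 1 := by simp [sqrtOneSubCoeff]

lemma succ_mul_sqrtOneSubCoeff_succ (l : ℕ) :
    (l + 1) * sqrtOneSubCoeff (l + 1) = (l - 1 / 2) * sqrtOneSubCoeff l := by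
  simp only [sqrtOneSubCoeff, prod_range_succ, Nat.factorial_succ]
  push_cast
  field_simp
  ring

lemma sqrtOneSubCoeff_neg {l : ℕ} (hl : 1 ≤ l) : sqrtOneSubCoeff l < 0 := by
  induction l, hl using Nat.le_induction with
  | base => norm_num [sqrtOneSubCoeff]
  | succ n hn ih =>
    have hrec := succ_mul_sqrtOneSubCoeff_succ n
    have hn' : (1 : ℝ) ≤ n := by exact_mod_cast hn
    nlinarith

lemma sum_range_sqrtOneSubCoeff (m : ℕ) :
    ∑ l ∈ range (m + 1), sqrtOneSubCoeff l = (1 - 2 * m) * sqrtOneSubCoeff m := by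
  induction m with
  | zero => simp
  | succ n ih =>
    rw [sum_range_succ, ih]
    push_cast
    linarith [succ_mul_sqrtOneSubCoeff_succ n]

lemma sum_range_abs_sqrtOneSubCoeff_succ_lt_one {m : ℕ} (hm : 1 ≤ m) :
    ∑ l ∈ range m, |sqrtOneSubCoeff (l + 1)| < 1 := by
  have hsum := sum_range_sqrtOneSubCoeff m
  rw [sum_range_succ', sqrtOneSubCoeff_zero] at hsum
  rw [sum_congr rfl fun l _ => abs_of_neg (sqrtOneSubCoeff_neg (Nat.le_add_left 1 l)),
    sum_neg_distrib]
  have hm' : (1 : ℝ) ≤ m := by exact_mod_cast hm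
  nlinarith [sqrtOneSubCoeff_neg hm]

lemma sum_range_mul_pow_ne_zero {c : ℕ → ℂ} {m : ℕ} (hc0 : c 0 = 1)
    (hc : ∑ l ∈ range m, ‖c (l + 1)‖ < 1) {u : ℂ} (hu : ‖u‖ ≤ 1) :
    ∑ l ∈ range (m + 1), c l * u ^ l ≠ 0 := by
  have htail : ‖∑ l ∈ range m, c (l + 1) * u ^ (l + 1)‖ < 1 :=
    calc ‖∑ l ∈ range m, c (l + 1) * u ^ (l + 1)‖
        ≤ ∑ l ∈ range m, ‖c (l + 1)‖ := by
          refine (norm_sum_le _ _).trans (sum_le_sum fun l _ => ?_)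
          rw [norm_mul, norm_pow]
          exact mul_le_of_le_one_right (norm_nonneg _) (pow_le_one₀ (norm_nonneg u) hu)
      _ < 1 := hc
  rw [sum_range_succ', hc0, pow_zero, one_mul]
  intro h
  rw [eq_neg_of_add_eq_zero_left h, norm_neg, norm_one] at htail
  exact lt_irrefl 1 htail

lemma sFun_eq_sum (m : ℕ) (z : ℂ) :
    sFun m z = ∑ l ∈ range (m + 1), (sqrtOneSubCoeff l : ℂ) * z ^ l := by
  simp only [sFun, ofReal_sqrtOneSubCoeff]

lemma sFun_ne_zero {m : ℕ} (hm : 1 ≤ m) {u : ℂ} (hu : ‖u‖ ≤ 1) : sFun m u ≠ 0 := by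
  rw [sFun_eq_sum]
  refine sum_range_mul_pow_ne_zero (by simp) ?_ hu
  simpa only [Complex.norm_real, Real.norm_eq_abs] using
    sum_range_abs_sqrtOneSubCoeff_succ_lt_one hm

lemma norm_inv_le_one_of_sFun_eq_prod {m : ℕ} (hm : 1 ≤ m) {w : Fin m → ℂ}
    (hw : ∀ z, sFun m z = ∏ a, (1 - z / w a)) (a : Fin m) : ‖(w a)⁻¹‖ ≤ 1 := by
  rcases eq_or_ne (w a) 0 with h0 | h0
  · simp [h0]
  have hroot : sFun m (w a) = 0 := by
    rw [hw]
    exact prod_eq_zero (mem_univ a) (by rw [div_self h0, sub_self])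
  by_contra hlt
  rw [norm_inv, not_le, one_lt_inv_iff₀] at hlt
  exact sFun_ne_zero hm hlt.2.le hroot

noncomputable def sqrtOneSubPoly (m : ℕ) : ℂ[X] :=
  ∑ l ∈ range (m + 1), C (sqrtOneSubCoeff l : ℂ) * X ^ l

lemma eval_sqrtOneSubPoly (m : ℕ) (z : ℂ) : (sqrtOneSubPoly m).eval z = sFun m z := by
  simp [sqrtOneSubPoly, sFun_eq_sum, eval_finsetSum]

lemma coeff_sqrtOneSubPoly (m k : ℕ) :
    (sqrtOneSubPoly m).coeff k = if k ≤ m then (sqrtOneSubCoeff k : ℂ) else 0 := by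
  simp [sqrtOneSubPoly, coeff_C_mul, coeff_X_pow]

lemma sqrtOneSubPoly_eq_prod {m : ℕ} {w : Fin m → ℂ} (hw : ∀ z, sFun m z = ∏ a, (1 - z / w a)) :
    sqrtOneSubPoly m = ∏ a, (1 - C (w a)⁻¹ * X) := by
  refine Polynomial.funext fun z => ?_
  rw [eval_sqrtOneSubPoly, hw, eval_prod]
  simp only [eval_sub, eval_one, eval_mul, eval_C, eval_X, div_eq_inv_mul]

lemma coeff_one_sub_X_mul_derivative_sqrtOneSubPoly {m k : ℕ} (hk : k < m) :
    ((1 - X) * derivative (sqrtOneSubPoly m) + C (1 / 2) * sqrtOneSubPoly m).coeff k = 0 := by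
  have hX : (X * derivative (sqrtOneSubPoly m)).coeff k = k * (sqrtOneSubCoeff k : ℂ) := by
    cases k with
    | zero => simp
    | succ j => simp [coeff_derivative, coeff_sqrtOneSubPoly, hk.le, mul_comm]
  have hrec := congrArg (fun x : ℝ => (x : ℂ)) (succ_mul_sqrtOneSubCoeff_succ k)
  push_cast at hrec
  rw [sub_mul, one_mul, coeff_add, coeff_sub, hX, coeff_C_mul, coeff_derivative,
    coeff_sqrtOneSubPoly, coeff_sqrtOneSubPoly, if_pos (Nat.succ_le_of_lt hk), if_pos hk.le]
  linear_combination hrec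

section PowerSums

variable {R : Type*} [CommRing R] {ι : Type*}

lemma one_sub_C_mul_X_mul_mk_pow_succ (v : R) :
    (1 - PowerSeries.C v * PowerSeries.X) * PowerSeries.mk (fun k => v ^ (k + 1)) =
      PowerSeries.C v := by
  ext n
  rw [sub_mul, one_mul, map_sub, mul_assoc, PowerSeries.coeff_C_mul, PowerSeries.coeff_mk,
    PowerSeries.coeff_C]
  cases n with
  | zero => simp
  | succ n => simp [PowerSeries.coeff_succ_X_mul, pow_succ']

lemma coe_derivative_prod_one_sub_C_mul_X (s : Finset ι) (v : ι → R) :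
    ((derivative (∏ a ∈ s, (1 - C (v a) * X)) : R[X]) : PowerSeries R) =
      -PowerSeries.mk (fun k => ∑ a ∈ s, v a ^ (k + 1)) *
        ((∏ a ∈ s, (1 - C (v a) * X) : R[X]) : PowerSeries R) := by
  classical
  induction s using Finset.induction_on with
  | empty =>
    ext
    simp
  | insert b s hb ih =>
    have hmk : PowerSeries.mk (fun k => ∑ a ∈ insert b s, v a ^ (k + 1)) =
        PowerSeries.mk (fun k => v b ^ (k + 1)) +
          PowerSeries.mk (fun k => ∑ a ∈ s, v a ^ (k + 1)) := by
      ext k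
      simp [sum_insert hb]
    have hfactor : derivative (1 - C (v b) * X) = -C (v b) := by simp
    rw [prod_insert hb, derivative_mul, hfactor, hmk]
    push_cast [ih]
    linear_combination
      ((∏ a ∈ s, (1 - C (v a) * X) : R[X]) : PowerSeries R) * one_sub_C_mul_X_mul_mk_pow_succ (v b)

lemma sum_pow_eq_of_coeff_eq_zero [Fintype ι] (v : ι → R) (β : R) {m : ℕ} {P : R[X]}
    (hP : P = ∏ a, (1 - C (v a) * X))
    (hode : ∀ k < m, ((1 - X) * derivative P + C β * P).coeff k = 0)
    {k : ℕ} (hk1 : 1 ≤ k) (hkm : k ≤ m) : ∑ a, v a ^ k = β := by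
  let F := PowerSeries.mk (fun k => ∑ a, v a ^ (k + 1))
  have hfactor : (((1 - X) * derivative P + C β * P : R[X]) : PowerSeries R) =
      (P : PowerSeries R) * (PowerSeries.C β - (1 - PowerSeries.X) * F) := by
    rw [Polynomial.coe_add, Polynomial.coe_mul, Polynomial.coe_mul, hP,
      coe_derivative_prod_one_sub_C_mul_X]
    push_cast
    ring
  have hunit : IsUnit (P : PowerSeries R) := by
    rw [PowerSeries.isUnit_iff_constantCoeff, Polynomial.constantCoeff_coe, hP,
      coeff_zero_eq_eval_zero]
    simp [eval_prod]
  have hcoeff : ∀ j < m, PowerSeries.coeff j (PowerSeries.C β - (1 - PowerSeries.X) * F) = 0 := by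
    rw [← PowerSeries.X_pow_dvd_iff, ← hunit.dvd_mul_left, ← hfactor, PowerSeries.X_pow_dvd_iff]
    intro j hj
    rw [Polynomial.coeff_coe]
    exact hode j hj
  have hcoeff_zero : PowerSeries.coeff 0 (PowerSeries.C β - (1 - PowerSeries.X) * F) =
      β - ∑ a, v a ^ 1 := by
    simp [F]
  have hcoeff_succ (i : ℕ) :
      PowerSeries.coeff (i + 1) (PowerSeries.C β - (1 - PowerSeries.X) * F) =
        ∑ a, v a ^ (i + 1) - ∑ a, v a ^ (i + 2) := by
    simp [F, sub_mul, PowerSeries.coeff_succ_X_mul]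
  induction k, hk1 using Nat.le_induction with
  | base => linear_combination -(hcoeff_zero.symm.trans (hcoeff 0 (by omega)))
  | succ j hj ih =>
    obtain ⟨i, rfl⟩ : ∃ i, j = i + 1 := ⟨j - 1, by omega⟩
    linear_combination -(hcoeff_succ i).symm.trans (hcoeff (i + 1) (by omega)) + ih (by omega)

end PowerSums

lemma prod_one_sub_eq_exp_neg_tsum {ι : Type*} [Fintype ι] {u : ι → ℂ} (hu : ∀ i, ‖u i‖ < 1) :
    ∏ i, (1 - u i) = exp (-∑' n : ℕ, (∑ i, u i ^ n) / n) := by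
  have hsum : HasSum (fun n : ℕ => (∑ i, u i ^ n) / n) (∑ i, -log (1 - u i)) := by
    simp_rw [sum_div]
    exact hasSum_sum fun i _ => hasSum_taylorSeries_neg_log (hu i)
  have hne : ∀ i, 1 - u i ≠ 0 := fun i h => by
    simpa [← eq_of_sub_eq_zero h] using hu i
  rw [hsum.tsum_eq, sum_neg_distrib, neg_neg, exp_sum]
  exact prod_congr rfl fun i _ => (exp_log (hne i)).symm

lemma prod_prod_one_sub_mul_mul_eq_exp {ι : Type*} [Fintype ι] {v : ι → ℂ} {z : ℂ}
    (hv : ∀ a, ‖v a‖ ≤ 1) (hz : ‖z‖ < 1) :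
    ∏ a, ∏ b, (1 - z * v a * v b) = exp (-∑' n : ℕ, (∑ a, v a ^ n) ^ 2 * (z ^ n / n)) := by
  have hpair : ∀ x : ι × ι, ‖z * v x.1 * v x.2‖ < 1 := fun x => by
    rw [norm_mul, norm_mul]
    calc ‖z‖ * ‖v x.1‖ * ‖v x.2‖ ≤ ‖z‖ * 1 * 1 := by gcongr <;> exact hv _
      _ < 1 := by simpa using hz
  rw [← Fintype.prod_prod_type' (fun a b => 1 - z * v a * v b),
    prod_one_sub_eq_exp_neg_tsum hpair]
  congr 3 with n
  rw [Fintype.sum_prod_type, sq, sum_mul_sum, sum_mul, sum_div]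
  refine sum_congr rfl fun a _ => ?_
  rw [sum_mul, sum_div]
  refine sum_congr rfl fun b _ => ?_
  ring

lemma norm_sum_pow_le_one_add_norm_mul {m n : ℕ} {v : Fin m → ℂ} {β : ℂ}
    (hv : ∀ a, ‖v a‖ ≤ 1) (hpow : ∀ k, 1 ≤ k → k ≤ m → ∑ a, v a ^ k = β) (hn : 1 ≤ n) :
    ‖∑ a, v a ^ n‖ ≤ (‖β‖ + 1) * n := by
  have hn' : (1 : ℝ) ≤ n := by exact_mod_cast hn
  rcases le_or_gt n m with hnm | hmn
  · rw [hpow n hn hnm]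
    nlinarith [norm_nonneg β]
  · calc ‖∑ a, v a ^ n‖ ≤ ∑ _a : Fin m, (1 : ℝ) :=
          (norm_sum_le _ _).trans (sum_le_sum fun a _ => by
            rw [norm_pow]
            exact pow_le_one₀ (norm_nonneg _) (hv a))
      _ = m := by simp
      _ ≤ n := by exact_mod_cast hmn.le
      _ ≤ (‖β‖ + 1) * n := by nlinarith [norm_nonneg β]

lemma tendsto_prod_prod_one_sub_mul_mul {v : (m : ℕ) → Fin m → ℂ} {β z : ℂ}
    (hv : ∀ᶠ m in atTop, ∀ a, ‖v m a‖ ≤ 1)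
    (hpow : ∀ᶠ m in atTop, ∀ k, 1 ≤ k → k ≤ m → ∑ a, v m a ^ k = β) (hz : ‖z‖ < 1) :
    Tendsto (fun m => ∏ a, ∏ b, (1 - z * v m a * v m b)) atTop
      (𝓝 (exp (β ^ 2 * log (1 - z)))) := by
  have hseries : Tendsto (fun m => ∑' n : ℕ, (∑ a, v m a ^ n) ^ 2 * (z ^ n / n)) atTop
      (𝓝 (∑' n : ℕ, β ^ 2 * (z ^ n / n))) := by
    refine tendsto_tsum_of_dominated_convergence (bound := fun n => ((‖β‖ + 1) * n) ^ 2 * ‖z‖ ^ n)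
      ?_ (fun n => ?_) ?_
    · simpa only [mul_pow, mul_assoc] using
        (summable_pow_mul_geometric_of_norm_lt_one 2 (r := ‖z‖) (by simpa using hz)).mul_left
          ((‖β‖ + 1) ^ 2)
    · rcases Nat.eq_zero_or_pos n with rfl | hn
      · simp -- the `n = 0` terms are `z ^ 0 / 0 = 0`
      refine tendsto_const_nhds.congr' ?_
      filter_upwards [hpow, eventually_ge_atTop n] with m hpm hnm
      rw [hpm n hn hnm]
    · filter_upwards [hv, hpow] with m hvm hpm n
      rcases Nat.eq_zero_or_pos n with rfl | hn
      · simp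
      have hzn : ‖z ^ n / n‖ ≤ ‖z‖ ^ n := by
        rw [norm_div, norm_pow, norm_natCast]
        exact div_le_self (by positivity) (by exact_mod_cast hn)
      rw [norm_mul, norm_pow]
      gcongr
      exact norm_sum_pow_le_one_add_norm_mul hvm hpm hn
  have hlimit : ∑' n : ℕ, β ^ 2 * (z ^ n / n) = -(β ^ 2 * log (1 - z)) := by
    rw [((hasSum_taylorSeries_neg_log hz).mul_left (β ^ 2)).tsum_eq, mul_neg]
  rw [hlimit] at hseries
  simpa only [neg_neg] using
    ((continuous_exp.tendsto _).comp hseries.neg).congr'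
      (hv.mono fun m hvm => (prod_prod_one_sub_mul_mul_eq_exp hvm hz).symm)

/-- Appendix F: quarter-power limit from truncated square-root factorizations.  If
`w^{(m)}` lists the roots of `s_m` (so that `s_m(z) = ∏_a (1 − z/w_a^{(m)})`), then for
`|z| < 1` the double products `∏_{a,b} (1 − z/(w_a^{(m)} w_b^{(m)}))` converge to
`(1−z)^{1/4} = exp(¼ Log(1−z))`. -/
theorem quarter_power_limit
    (w : (m : ℕ) → Fin m → ℂ)
    (hw : ∀ m : ℕ, 1 ≤ m → ∀ z : ℂ, sFun m z = ∏ a, (1 - z / w m a))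
    (z : ℂ) (hz : ‖z‖ < 1) :
    Tendsto
      (fun m : ℕ => ∏ a : Fin m, ∏ b : Fin m, (1 - z / (w m a * w m b)))
      atTop
      (nhds (Complex.exp ((1 / 4) * Complex.log (1 - z)))) := by
  have hinv : ∀ᶠ m in atTop, ∀ a, ‖(w m a)⁻¹‖ ≤ 1 := by
    filter_upwards [eventually_ge_atTop 1] with m hm
    exact norm_inv_le_one_of_sFun_eq_prod hm (hw m hm)
  have hhalf : ∀ᶠ m in atTop, ∀ k, 1 ≤ k → k ≤ m → ∑ a, (w m a)⁻¹ ^ k = 1 / 2 := by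
    filter_upwards [eventually_ge_atTop 1] with m hm k hk1 hkm
    exact sum_pow_eq_of_coeff_eq_zero _ _ (sqrtOneSubPoly_eq_prod (hw m hm))
      (fun j hj => coeff_one_sub_X_mul_derivative_sqrtOneSubPoly hj) hk1 hkm
  convert tendsto_prod_prod_one_sub_mul_mul hinv hhalf hz using 4
  · rw [div_eq_mul_inv, mul_inv, mul_assoc]
  · norm_num
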